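/- Let s > 0 be a constant such that (∫_{Q_l} |u|^p dx)^{2/p} ≤ s ∫_{Q_l} (|g|² + u²) dx for every l ∈ ℤ^N and every H¹ function u with weak gradient g (a uniform H¹(Q)↪L^p(Q) embedding constant on unit cubes). Then every H¹ function v with weak gradient g and |v|_p < ∞ satisfies ∫_{ℝ^N} |v|^p dx ≤ s · ( sup_{l ∈ ℤ^N} ∫_{Q_l} |v|^p dx )^{(p−2)/p} · ∫_{ℝ^N} (|g|² + v²) dx. -/

import Mathlib

open MeasureTheory Filter Topology

noncomputable section

namespace Paper

/-- `ℝ^N` as a Euclidean space. -/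
abbrev Euc (N : ℕ) := EuclideanSpace ℝ (Fin N)

/-- The last coordinate `x_N` of a point `x ∈ ℝ^N`. -/
def lastCoord (N : ℕ) (x : Euc N) : ℝ :=
  if h : 0 < N then x ⟨N - 1, Nat.sub_lt h one_pos⟩ else 0

/-- The norm `|x'|` of the first `N-1` coordinates of `x ∈ ℝ^N`. -/
def primeNorm (N : ℕ) (x : Euc N) : ℝ :=
  Real.sqrt (∑ j : Fin N, if (j : ℕ) < N - 1 then (x j) ^ 2 else 0)

/-- The point `(0, …, 0, t)` on the `x_N`-axis. -/
def axisPt (N : ℕ) (t : ℝ) : Euc N :=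
  WithLp.toLp 2 fun j => if (j : ℕ) = N - 1 then t else 0

/-- A `C_c^∞` test function on `ℝ^N`. -/
def IsTestFun {N : ℕ} (φ : Euc N → ℝ) : Prop :=
  ContDiff ℝ (⊤ : ℕ∞) φ ∧ HasCompactSupport φ

/-- The `L^p` norm `|u|_p = (∫ |u|^p)^{1/p}`. -/
def pnorm {N : ℕ} (p : ℝ) (u : Euc N → ℝ) : ℝ :=
  (∫ x, |u x| ^ p) ^ (1 / p)

/-- `‖u‖² = ∫ (|g|² + u²)`, for `u` with weak gradient `g`. -/
def energy {N : ℕ} (u : Euc N → ℝ) (g : Euc N → Euc N) : ℝ :=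
  ∫ x, (‖g x‖ ^ 2 + (u x) ^ 2)

/-- `(u, g)` is an `H¹` function with weak gradient `g`. -/
def IsH1 {N : ℕ} (u : Euc N → ℝ) (g : Euc N → Euc N) : Prop :=
  LocallyIntegrable u volume ∧ LocallyIntegrable g volume ∧
  Integrable (fun x => ‖g x‖ ^ 2 + (u x) ^ 2) volume ∧
  ∀ φ : Euc N → ℝ, IsTestFun φ → ∀ i : Fin N,
    ∫ x, u x * fderiv ℝ φ x (EuclideanSpace.single i 1) = - ∫ x, (g x i) * φ x

/-- `u ∈ H¹₀(D)`, with weak gradient `g`. -/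
def MemH10 {N : ℕ} (D : Set (Euc N)) (u : Euc N → ℝ) (g : Euc N → Euc N) : Prop :=
  IsH1 u g ∧ ∃ uk : ℕ → Euc N → ℝ,
    (∀ k, IsTestFun (uk k) ∧ tsupport (uk k) ⊆ D) ∧
    Tendsto (fun k => ∫ x, (‖gradient (uk k) x - g x‖ ^ 2 + (uk k x - u x) ^ 2))
      atTop (𝓝 0)

/-- `m = inf { ∫ (|∇u|² + u²) : u ∈ C_c^∞(ℝ^N), |u|_p = 1 }`. -/
def mconst (N : ℕ) (p : ℝ) : ℝ :=
  sInf { c | ∃ u : Euc N → ℝ, IsTestFun u ∧ pnorm p u = 1 ∧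
    c = ∫ x, (‖gradient u x‖ ^ 2 + (u x) ^ 2) }

/-- The strip `{ x : |x_N - t| < q/2 }`; `S_q = strip N q 0`. -/
def strip (N : ℕ) (q t : ℝ) : Set (Euc N) :=
  { x | |lastCoord N x - t| < q / 2 }

/-- `i ↦ q_i` is a bijection from the positive integers onto the positive rationals. -/
def QBij (q : ℕ → ℚ) : Prop :=
  (∀ i, 1 ≤ i → 0 < q i) ∧ ∀ r : ℚ, 0 < r → ∃! i, 1 ≤ i ∧ q i = r

/-- The domain `Ω`. -/
def omegaSet (N : ℕ) (q : ℕ → ℚ) : Set (Euc N) :=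
  { x | primeNorm N x < 1 } ∪ strip N (q 1) 0 ∪
    ⋃ i ∈ { i : ℕ | 2 ≤ i },
      strip N (q i) ((i : ℝ) + (∑ j ∈ Finset.Icc 1 (i - 1), (q j : ℝ)) + (q i : ℝ) / 2)

/-- The height of the point `Q_i^-`. -/
def qMinusHt (q : ℕ → ℚ) (i : ℕ) : ℝ :=
  if i = 1 then -(q 1 : ℝ) / 2 else (i : ℝ) + ∑ j ∈ Finset.Icc 1 (i - 1), (q j : ℝ)

/-- The height of the point `Q_i^+`. -/
def qPlusHt (q : ℕ → ℚ) (i : ℕ) : ℝ :=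
  if i = 1 then (q 1 : ℝ) / 2 else (i : ℝ) + ∑ j ∈ Finset.Icc 1 i, (q j : ℝ)

/-- `u` is a weak solution of `-Δu + u = μ|u|^{p-2}u` in `D`, `u ∈ H¹₀(D)`. -/
def IsWeakSolution {N : ℕ} (p : ℝ) (D : Set (Euc N)) (μ : ℝ)
    (u : Euc N → ℝ) (g : Euc N → Euc N) : Prop :=
  MemH10 D u g ∧ ∀ w : Euc N → ℝ, IsTestFun w → tsupport w ⊆ D →
    ∫ x, ((inner ℝ (g x) (gradient w x) : ℝ) + u x * w x) =
      μ * ∫ x, |u x| ^ (p - 2) * u x * w x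

/-- `u` is axially symmetric: up to a.e. equality it depends only on `(|x'|, x_N)`. -/
def AxiallySymmetric {N : ℕ} (u : Euc N → ℝ) : Prop :=
  ∃ v : ℝ → ℝ → ℝ, u =ᵐ[volume] fun x => v (primeNorm N x) (lastCoord N x)

/-- The local average `ũ(x) = (1/λ(B(x,1))) ∫_{B(x,1)} |u|`. -/
def locAvg {N : ℕ} (u : Euc N → ℝ) (x : Euc N) : ℝ :=
  (volume (Metric.ball x 1)).toReal⁻¹ * ∫ y in Metric.ball x 1, |u y|

/-- `û(x) = max(ũ(x) - (1/2) sup ũ, 0)`. -/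
def hatFn {N : ℕ} (u : Euc N → ℝ) (x : Euc N) : ℝ :=
  max (locAvg u x - (⨆ z, locAvg u z) / 2) 0

/-- The barycenter `β(u) = (∫ û(x)^p x dx) / (∫ û(x)^p dx)`. -/
def bary {N : ℕ} (p : ℝ) (u : Euc N → ℝ) : Euc N :=
  (∫ x, (hatFn u x) ^ p)⁻¹ • ∫ x, (hatFn u x) ^ p • x

/-- `Θ(q)`: the infimum of the energy over test functions supported in `S_q`. -/
def theta (N : ℕ) (p q : ℝ) : ℝ :=
  sInf { c | ∃ u : Euc N → ℝ, IsTestFun u ∧ tsupport u ⊆ strip N q 0 ∧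
    pnorm p u = 1 ∧ c = ∫ x, (‖gradient u x‖ ^ 2 + (u x) ^ 2) }

/-- The unit cube `Q_l` with integer vertex `l ∈ ℤ^N`. -/
def cube (N : ℕ) (l : Fin N → ℤ) : Set (Euc N) :=
  { x | ∀ j, (l j : ℝ) ≤ x j ∧ x j < (l j : ℝ) + 1 }

end Paper

open Paper


lemma cube_measurable' (N : ℕ) (l : Fin N → ℤ) : MeasurableSet (cube N l) := by
  have h : cube N l = ⋂ j, (EuclideanSpace.proj (𝕜 := ℝ) j) ⁻¹' Set.Ico (l j : ℝ) ((l j : ℝ) + 1) := by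
    ext x; simp [cube, Set.mem_Ico]
  rw [h]
  exact MeasurableSet.iInter fun j =>
    (EuclideanSpace.proj (𝕜 := ℝ) j).continuous.measurable measurableSet_Ico

lemma cube_disjoint' (N : ℕ) : Pairwise (Function.onFun Disjoint (cube N)) := by
  intro l l' hne
  rw [Function.onFun, Set.disjoint_left]
  intro x hx hx'
  apply hne
  funext j
  have h1 := hx j; have h2 := hx' j
  have e1 : ⌊x j⌋ = l j := Int.floor_eq_iff.mpr ⟨h1.1, h1.2⟩
  have e2 : ⌊x j⌋ = l' j := Int.floor_eq_iff.mpr ⟨h2.1, h2.2⟩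
  omega

lemma cube_union' (N : ℕ) : (⋃ l, cube N l) = Set.univ := by
  ext x
  simp only [Set.mem_iUnion, Set.mem_univ, iff_true]
  exact ⟨fun j => ⌊x j⌋, fun j => ⟨Int.floor_le _, Int.lt_floor_add_one _⟩⟩

open MeasureTheory in
/-- from a uniform `H¹(Q_l) ↪ L^p(Q_l)` embedding constant on unit
cubes one gets `∫|v|^p ≤ s (sup_l ∫_{Q_l}|v|^p)^{(p-2)/p} ∫(|g|² + v²)`. -/
theorem statement16 (N : ℕ) (hN : 3 ≤ N) (p : ℝ) (hp : 2 < p)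
    (hp' : p < 2 * N / ((N : ℝ) - 2)) (s : ℝ) (hs : 0 < s)
    (hemb : ∀ l : Fin N → ℤ, ∀ (u : Euc N → ℝ) (g : Euc N → Euc N), IsH1 u g →
      (∫ x in cube N l, |u x| ^ p) ^ (2 / p) ≤
        s * ∫ x in cube N l, (‖g x‖ ^ 2 + (u x) ^ 2)) :
    ∀ (v : Euc N → ℝ) (g : Euc N → Euc N), IsH1 v g →
      Integrable (fun x => |v x| ^ p) volume →
      (∫ x, |v x| ^ p) ≤
        s * (⨆ l : Fin N → ℤ, ∫ x in cube N l, |v x| ^ p) ^ ((p - 2) / p) *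
          ∫ x, (‖g x‖ ^ 2 + (v x) ^ 2) := by
  intro v g hv hf
  have hp0 : (0:ℝ) < p := by linarith
  set f : Euc N → ℝ := fun x => |v x| ^ p with hfdef
  set h : Euc N → ℝ := fun x => ‖g x‖ ^ 2 + (v x) ^ 2 with hhdef
  have hfnn : ∀ x, 0 ≤ f x := fun x => Real.rpow_nonneg (abs_nonneg _) _
  have hhnn : ∀ x, 0 ≤ h x := fun x => add_nonneg (by positivity) (sq_nonneg _)
  have hh : Integrable h volume := hv.2.2.1
  set a : (Fin N → ℤ) → ℝ := fun l => ∫ x in cube N l, f x with hadef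
  set E : (Fin N → ℤ) → ℝ := fun l => ∫ x in cube N l, h x with hEdef
  have hann : ∀ l, 0 ≤ a l := fun l =>
    setIntegral_nonneg (cube_measurable' N l) fun x _ => hfnn x
  have hEnn : ∀ l, 0 ≤ E l := fun l =>
    setIntegral_nonneg (cube_measurable' N l) fun x _ => hhnn x
  have haT : ∀ l, a l ≤ ∫ x, f x := fun l =>
    setIntegral_le_integral hf (Filter.Eventually.of_forall hfnn)
  have hbdd : BddAbove (Set.range a) := by
    refine ⟨∫ x, f x, ?_⟩
    rintro _ ⟨l, rfl⟩; exact haT l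
  set M : ℝ := ⨆ l, a l with hMdef
  have haM : ∀ l, a l ≤ M := fun l => le_ciSup hbdd l
  have hM0 : 0 ≤ M := le_trans (hann 0) (haM 0)
  have hMe : 0 ≤ M ^ ((p - 2) / p) := Real.rpow_nonneg hM0 _
  have key : ∀ l, a l ≤ (M ^ ((p - 2) / p) * s) * E l := by
    intro l
    rcases eq_or_lt_of_le (hann l) with h0 | h0
    · rw [← h0]
      exact mul_nonneg (mul_nonneg hMe hs.le) (hEnn l)
    · have hsplit : a l = a l ^ ((p - 2) / p) * a l ^ (2 / p) := by
        rw [← Real.rpow_add h0]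
        have : (p - 2) / p + 2 / p = 1 := by field_simp; ring
        rw [this, Real.rpow_one]
      rw [hsplit]
      have h1 : a l ^ ((p - 2) / p) ≤ M ^ ((p - 2) / p) :=
        Real.rpow_le_rpow (hann l) (haM l) (div_nonneg (by linarith) hp0.le)
      have h2 : a l ^ (2 / p) ≤ s * E l := hemb l v g hv
      calc a l ^ ((p - 2) / p) * a l ^ (2 / p)
          ≤ M ^ ((p - 2) / p) * (s * E l) :=
            mul_le_mul h1 h2 (Real.rpow_nonneg (hann l) _) hMe
        _ = (M ^ ((p - 2) / p) * s) * E l := by ring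
  have hfs : HasSum a (∫ x, f x) := by
    have := hasSum_integral_iUnion (μ := volume) (f := f) (cube_measurable' N)
      (cube_disjoint' N) (by rw [cube_union']; exact hf.integrableOn)
    rwa [cube_union', setIntegral_univ] at this
  have hhs : HasSum E (∫ x, h x) := by
    have := hasSum_integral_iUnion (μ := volume) (f := h) (cube_measurable' N)
      (cube_disjoint' N) (by rw [cube_union']; exact hh.integrableOn)
    rwa [cube_union', setIntegral_univ] at this
  have hfin := hasSum_le key hfs (hhs.mul_left (M ^ ((p - 2) / p) * s))
  calc (∫ x, f x) ≤ (M ^ ((p - 2) / p) * s) * ∫ x, h x := hfin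
    _ = s * M ^ ((p - 2) / p) * ∫ x, h x := by ring
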